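/- Under the assumptions of the preceding theorem (Wasserstein contractive P, E_p(x₀) < ∞), if additionally ∫ E_1(x)^{p₀} π(dx) < ∞ for some p₀ ≥ 1, then the unique solution u ∈ L₀ of Poisson's equation u - Pu = f satisfies the pointwise bound |u(x)| ≤ Λ·‖f‖_d·E_1(x) for all x, and consequently ∫ |u|^{p₀} dπ ≤ (Λ‖f‖_d)^{p₀} ∫ E_1^{p₀} dπ. -/

import Mathlib

open MeasureTheory ProbabilityTheory ENNReal Filter

noncomputable section

/-- `η` is a coupling of `μ` and `ν`. -/
def IsCoupling {X : Type*} [MeasurableSpace X] (η : Measure (X × X)) (μ ν : Measure X) : Prop :=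
  η.map Prod.fst = μ ∧ η.map Prod.snd = ν

/-- The 1-Wasserstein distance between two measures, w.r.t. the metric of `X`. -/
def wass {X : Type*} [MeasurableSpace X] [MetricSpace X] (μ ν : Measure X) : ℝ≥0∞ :=
  ⨅ η : {η : Measure (X × X) // IsCoupling η μ ν}, ∫⁻ p, edist p.1 p.2 ∂(η : Measure (X × X))

/-- The Kantorovich norm of a Markov kernel. -/
def tau {X : Type*} [MeasurableSpace X] [MetricSpace X] (K : Kernel X X) : ℝ≥0∞ :=
  ⨆ (x : X) (y : X) (_ : x ≠ y), wass (K x) (K y) / edist x y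

/-- The `p`-eccentricity of `π` at `x₀`. -/
def ecc {X : Type*} [MeasurableSpace X] [MetricSpace X] (π : Measure X) (p : ℝ) (x₀ : X) : ℝ≥0∞ :=
  ∫⁻ y, edist x₀ y ^ p ∂π

/-- The Lipschitz seminorm `‖f‖_d` (valued in `ℝ≥0∞`). -/
def elip {X : Type*} [MetricSpace X] (f : X → ℝ) : ℝ≥0∞ :=
  ⨆ (x : X) (y : X) (_ : x ≠ y), ENNReal.ofReal |f x - f y| / edist x y

/-- Membership in the Banach space `L₀` of centred measurable Lipschitz functions. -/
def MemL0 {X : Type*} [MeasurableSpace X] [MetricSpace X] (π : Measure X) (f : X → ℝ) : Prop :=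
  Measurable f ∧ (∃ L : ℝ, ∀ x y, |f x - f y| ≤ L * dist x y) ∧
    Integrable f π ∧ ∫ x, f x ∂π = 0

/-- Iterates of a Markov kernel. -/
def kpow {X : Type*} [MeasurableSpace X] (P : Kernel X X) : ℕ → Kernel X X
  | 0 => Kernel.id
  | n + 1 => (kpow P n) ∘ₖ P

/-- The first eccentricity `E₁(x) = ∫ d(x,y) π(dy)`. -/
def eccOne {X : Type*} [MeasurableSpace X] [MetricSpace X] (π : Measure X) (x : X) : ℝ≥0∞ :=
  ∫⁻ y, edist x y ∂π

/-!
Write `K g x = ∫ g d(K x)`. Integrating `g` against couplings gives the easy half of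
Kantorovich–Rubinstein duality, `|K g x - K g y| ≤ ‖g‖_d W(K x, K y) ≤ ‖g‖_d τ(K) d(x, y)`, i.e.
`‖K g‖_d ≤ τ(K) ‖g‖_d`; for `π`-centred `g` the identity `g x = ∫ (g x - g y) π(dy)` gives
`|g x| ≤ ‖g‖_d E₁(x)`. Invariance and `τ(P) < ∞` keep `∫ E₁ d(Pⁿ x)` finite, so Lipschitz
functions are integrable against every `Pⁿ x` and these estimates can be iterated along `Pⁿ f`.
Writing `n = q m + r` with `r < m` gives `‖Pⁿ f‖_d ≤ τ(P^m)^q τ(P)^r ‖f‖_d`, a summable bound, so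
the Neumann series `u = ∑ Pⁿ f` converges in `L₀`, solves `u - P u = f`, and satisfies
`|u| ≤ ∑ ‖Pⁿ f‖_d E₁ ≤ Λ ‖f‖_d E₁`. For uniqueness, a `P`-harmonic `w ∈ L₀` satisfies
`‖w‖_d = ‖P^m w‖_d ≤ τ(P^m) ‖w‖_d`, so `‖w‖_d = 0` and `|w| ≤ 0 · E₁`.
-/

lemma lintegral_rpow_le_of_le_mul {α : Type*} [MeasurableSpace α] {μ : Measure α}
    {F G : α → ℝ≥0∞} {c : ℝ≥0∞} {p : ℝ} (hp : 0 ≤ p) (hG : Measurable G)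
    (h : ∀ x, F x ≤ c * G x) : ∫⁻ x, F x ^ p ∂μ ≤ c ^ p * ∫⁻ x, G x ^ p ∂μ :=
  calc ∫⁻ x, F x ^ p ∂μ ≤ ∫⁻ x, (c * G x) ^ p ∂μ := lintegral_mono fun x => rpow_le_rpow (h x) hp
    _ = c ^ p * ∫⁻ x, G x ^ p ∂μ := by
        simp_rw [mul_rpow_of_nonneg _ _ hp]
        exact lintegral_const_mul _ (hG.pow_const p)

section Kernel

variable {X : Type*} [MeasurableSpace X]

def markovOp (K : Kernel X X) (f : X → ℝ) (x : X) : ℝ := ∫ y, f y ∂(K x)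

lemma measurable_markovOp (K : Kernel X X) {f : X → ℝ} (hf : Measurable f) :
    Measurable (markovOp K f) :=
  (hf.stronglyMeasurable.integral_kernel (κ := K)).measurable

lemma markovOp_comp {η κ : Kernel X X} {f : X → ℝ} (hi : ∀ x, Integrable f ((η ∘ₖ κ) x)) :
    markovOp (η ∘ₖ κ) f = markovOp κ (markovOp η f) :=
  funext fun x => Kernel.integral_comp (hi x)

lemma markovOp_id {f : X → ℝ} (hf : Measurable f) : markovOp Kernel.id f = f :=
  funext fun x => by rw [markovOp, Kernel.id_apply, integral_dirac' _ _ hf.stronglyMeasurable]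

lemma integral_markovOp {π : Measure X} {K : Kernel X X} (hK : K.Invariant π) {f : X → ℝ}
    (hi : Integrable f π) : ∫ x, markovOp K f x ∂π = ∫ x, f x ∂π := by
  have h := Kernel.integral_comp (κ := Kernel.const Unit π) (η := K) (a := ())
    (by rwa [← Measure.comp_eq_comp_const_apply, hK.def])
  rw [← Measure.comp_eq_comp_const_apply, hK.def, Kernel.const_apply] at h
  exact h.symm

variable (P : Kernel X X)

lemma kpow_eq_pow (n : ℕ) : kpow P n = P ^ n := by
  induction n with
  | zero => rfl
  | succ n ih => rw [kpow, ih, pow_succ]; rfl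

@[simp] lemma kpow_zero : kpow P 0 = Kernel.id := rfl

@[simp] lemma kpow_one : kpow P 1 = P := by simp [kpow_eq_pow]

lemma kpow_add (a b : ℕ) : kpow P (a + b) = kpow P a ∘ₖ kpow P b := by
  simp only [kpow_eq_pow]
  exact pow_add P a b

instance [IsMarkovKernel P] (n : ℕ) : IsMarkovKernel (kpow P n) := by
  induction n with
  | zero => rw [kpow_zero]; infer_instance
  | succ n ih => rw [kpow]; infer_instance

variable {P}

lemma invariant_kpow {π : Measure X} (hP : P.Invariant π) (n : ℕ) : (kpow P n).Invariant π := by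
  induction n with
  | zero => exact Measure.id_comp
  | succ n ih => exact ih.comp hP

end Kernel

section Metric

variable {X : Type*} [MetricSpace X]

lemma iSup_div_edist_le_iff {F : X → X → ℝ≥0∞} (hF : ∀ x, F x x = 0) {K : ℝ≥0∞} :
    (⨆ (x : X) (y : X) (_ : x ≠ y), F x y / edist x y) ≤ K ↔
      ∀ x y, F x y ≤ K * edist x y := by
  refine ⟨fun h x y => ?_, fun h =>
    iSup₂_le fun x y => iSup_le fun _ => ENNReal.div_le_of_le_mul (h x y)⟩
  rcases eq_or_ne x y with rfl | hxy
  · simp [hF]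
  calc F x y = F x y / edist x y * edist x y :=
        (ENNReal.div_mul_cancel (edist_pos.2 hxy).ne' (edist_ne_top x y)).symm
    _ ≤ K * edist x y := by
        gcongr
        exact le_trans (le_iSup₂_of_le x y (le_iSup_of_le (α := ℝ≥0∞) hxy le_rfl)) h

lemma elip_le_iff {f : X → ℝ} {K : ℝ≥0∞} :
    elip f ≤ K ↔ ∀ x y, ENNReal.ofReal |f x - f y| ≤ K * edist x y :=
  iSup_div_edist_le_iff fun x => by simp

lemma ofReal_abs_sub_le_elip_mul (f : X → ℝ) (x y : X) :
    ENNReal.ofReal |f x - f y| ≤ elip f * edist x y :=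
  elip_le_iff.1 le_rfl x y

lemma elip_ne_top_of_abs_sub_le {f : X → ℝ} {L : ℝ} (hL : ∀ x y, |f x - f y| ≤ L * dist x y) :
    elip f ≠ ∞ := by
  refine ne_top_of_le_ne_top (ofReal_ne_top (r := L)) (elip_le_iff.2 fun x y => ?_)
  rw [edist_dist, ← ENNReal.ofReal_mul' dist_nonneg]
  exact ofReal_le_ofReal (hL x y)

lemma abs_sub_le_toReal_elip_mul {f : X → ℝ} (hf : elip f ≠ ∞) (x y : X) :
    |f x - f y| ≤ (elip f).toReal * dist x y := by
  have h := ofReal_abs_sub_le_elip_mul f x y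
  rw [edist_dist, ← ofReal_toReal hf, ← ENNReal.ofReal_mul toReal_nonneg] at h
  exact (ofReal_le_ofReal_iff (by positivity)).1 h

lemma elip_tsum_le {g : ℕ → X → ℝ} (hg : ∀ x, Summable fun n => g n x) :
    elip (fun x => ∑' n, g n x) ≤ ∑' n, elip (g n) := by
  refine elip_le_iff.2 fun x y => ?_
  rw [← (hg x).tsum_sub (hg y), ← Real.enorm_eq_ofReal_abs, ← ENNReal.tsum_mul_right]
  refine enorm_tsum_le_tsum_enorm.trans (ENNReal.tsum_le_tsum fun n => ?_)
  rw [Real.enorm_eq_ofReal_abs]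
  exact ofReal_abs_sub_le_elip_mul (g n) x y

variable [MeasurableSpace X]

lemma MemL0.elip_ne_top {π : Measure X} {f : X → ℝ} (hf : MemL0 π f) : elip f ≠ ∞ :=
  elip_ne_top_of_abs_sub_le hf.2.1.choose_spec

lemma memL0_of_elip_ne_top {π : Measure X} {f : X → ℝ} (hm : Measurable f) (hL : elip f ≠ ∞)
    (hi : Integrable f π) (h0 : ∫ x, f x ∂π = 0) : MemL0 π f :=
  ⟨hm, ⟨_, abs_sub_le_toReal_elip_mul hL⟩, hi, h0⟩

lemma MemL0.sub {π : Measure X} {u v : X → ℝ} (hv : MemL0 π v) (hu : MemL0 π u) :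
    MemL0 π (v - u) := by
  obtain ⟨hvm, ⟨Lv, hLv⟩, hvi, hv0⟩ := hv
  obtain ⟨hum, ⟨Lu, hLu⟩, hui, hu0⟩ := hu
  refine ⟨hvm.sub hum, ⟨Lv + Lu, fun x y => ?_⟩, hvi.sub hui, ?_⟩
  · calc |(v - u) x - (v - u) y| = |(v x - v y) - (u x - u y)| := by
          simp only [Pi.sub_apply]; ring_nf
      _ ≤ |v x - v y| + |u x - u y| := abs_sub _ _
      _ ≤ (Lv + Lu) * dist x y := by linarith [hLv x y, hLu x y]
  · simp [integral_sub hvi hui, hv0, hu0]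

lemma wass_le_lintegral_edist {μ ν : Measure X} {η : Measure (X × X)} (hη : IsCoupling η μ ν) :
    wass μ ν ≤ ∫⁻ p, edist p.1 p.2 ∂η :=
  iInf_le_of_le ⟨η, hη⟩ le_rfl

lemma wass_self (μ : Measure X) : wass μ μ = 0 := by
  have hdiag : Measurable fun x : X => (x, x) := measurable_id.prodMk measurable_id
  have hη : IsCoupling (μ.map fun x => (x, x)) μ μ := by
    constructor <;> rw [Measure.map_map (by fun_prop) hdiag] <;> exact Measure.map_id
  refine le_antisymm ((wass_le_lintegral_edist hη).trans ?_) bot_le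
  exact (lintegral_map_le _ _).trans (by simp)

lemma wass_le_tau_mul (K : Kernel X X) (x y : X) :
    wass (K x) (K y) ≤ tau K * edist x y :=
  (iSup_div_edist_le_iff (fun x => wass_self (K x))).1 le_rfl x y

section Eccentricity

variable {π : Measure X} [IsProbabilityMeasure π]

lemma eccOne_le_eccOne_add_edist (x z : X) : eccOne π z ≤ eccOne π x + edist x z :=
  calc eccOne π z ≤ ∫⁻ y, edist x y + edist x z ∂π := lintegral_mono fun y => by
        rw [edist_comm x z, add_comm]
        exact edist_triangle z x y
    _ = eccOne π x + edist x z := by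
        rw [lintegral_add_right _ measurable_const]
        simp [eccOne]

lemma eccOne_ne_top_of_ecc_ne_top {p : ℝ} (hp : 1 ≤ p) {x₀ : X} (hE : ecc π p x₀ ≠ ∞) (x : X) :
    eccOne π x ≠ ∞ := by
  have hpt : ∀ y, edist x₀ y ≤ 1 + edist x₀ y ^ p := fun y => by
    rcases le_total (edist x₀ y) 1 with h | h
    · exact h.trans le_self_add
    · exact (ENNReal.le_rpow_self_of_one_le h hp).trans le_add_self
  have h₀ : eccOne π x₀ ≤ 1 + ecc π p x₀ :=
    calc eccOne π x₀ ≤ ∫⁻ y, 1 + edist x₀ y ^ p ∂π := lintegral_mono hpt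
      _ = 1 + ecc π p x₀ := by
          rw [lintegral_add_left measurable_const]
          simp [ecc]
  exact ne_top_of_le_ne_top (add_ne_top.2 ⟨add_ne_top.2 ⟨one_ne_top, hE⟩, edist_ne_top x₀ x⟩)
    ((eccOne_le_eccOne_add_edist x₀ x).trans (by gcongr))

lemma lintegral_eccOne_ne_top (hE : ∀ x, eccOne π x ≠ ∞) : ∫⁻ x, eccOne π x ∂π ≠ ∞ := by
  obtain ⟨x₀⟩ := nonempty_of_isProbabilityMeasure π
  refine ne_top_of_le_ne_top (add_ne_top.2 ⟨hE x₀, hE x₀⟩) ?_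
  calc ∫⁻ x, eccOne π x ∂π ≤ ∫⁻ x, eccOne π x₀ + edist x₀ x ∂π :=
        lintegral_mono fun x => eccOne_le_eccOne_add_edist x₀ x
    _ = eccOne π x₀ + eccOne π x₀ := by
        rw [lintegral_add_left measurable_const]
        simp [eccOne]

variable [OpensMeasurableSpace X]

lemma edist_le_eccOne_add_eccOne (x z : X) : edist x z ≤ eccOne π x + eccOne π z :=
  calc edist x z = ∫⁻ _, edist x z ∂π := by simp
    _ ≤ ∫⁻ y, edist x y + edist z y ∂π := lintegral_mono fun y => edist_triangle_right x z y
    _ = eccOne π x + eccOne π z := lintegral_add_left measurable_edist_right _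

lemma enorm_le_elip_mul_eccOne {g : X → ℝ} (hi : Integrable g π) (h0 : ∫ x, g x ∂π = 0)
    (x : X) : ‖g x‖ₑ ≤ elip g * eccOne π x :=
  calc ‖g x‖ₑ = ‖∫ y, (g x - g y) ∂π‖ₑ := by
        rw [integral_sub (integrable_const _) hi, h0]
        simp
    _ ≤ ∫⁻ y, ‖g x - g y‖ₑ ∂π := enorm_integral_le_lintegral_enorm _
    _ ≤ ∫⁻ y, elip g * edist x y ∂π := lintegral_mono fun y => by
        rw [Real.enorm_eq_ofReal_abs]
        exact ofReal_abs_sub_le_elip_mul g x y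
    _ = elip g * eccOne π x := lintegral_const_mul _ measurable_edist_right

lemma tsum_enorm_le_tsum_elip_mul {g : ℕ → X → ℝ} (hg : ∀ n, MemL0 π (g n)) (x : X) :
    ∑' n, ‖g n x‖ₑ ≤ (∑' n, elip (g n)) * eccOne π x := by
  rw [← ENNReal.tsum_mul_right]
  exact ENNReal.tsum_le_tsum fun n => enorm_le_elip_mul_eccOne (hg n).2.2.1 (hg n).2.2.2 x

lemma ofReal_abs_tsum_le_tsum_elip_mul {g : ℕ → X → ℝ} (hg : ∀ n, MemL0 π (g n)) (x : X) :
    ENNReal.ofReal |∑' n, g n x| ≤ (∑' n, elip (g n)) * eccOne π x := by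
  rw [← Real.enorm_eq_ofReal_abs]
  exact enorm_tsum_le_tsum_enorm.trans (tsum_enorm_le_tsum_elip_mul hg x)

lemma summable_of_tsum_elip_ne_top (hE : ∀ x, eccOne π x ≠ ∞) {g : ℕ → X → ℝ}
    (hg : ∀ n, MemL0 π (g n)) (hsum : ∑' n, elip (g n) ≠ ∞) (x : X) :
    Summable fun n => g n x :=
  Summable.of_norm <| tsum_enorm_ne_top_iff_summable_norm.1 <|
    ne_top_of_le_ne_top (mul_ne_top hsum (hE x)) (tsum_enorm_le_tsum_elip_mul hg x)

end Eccentricity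

variable [OpensMeasurableSpace X] [SecondCountableTopology X]

lemma ofReal_abs_integral_sub_le_elip_mul_wass {μ ν : Measure X} [IsProbabilityMeasure μ]
    [IsProbabilityMeasure ν] {g : X → ℝ} (hg : Measurable g) (hgL : elip g ≠ ∞)
    (hμ : Integrable g μ) (hν : Integrable g ν) :
    ENNReal.ofReal |∫ x, g x ∂μ - ∫ x, g x ∂ν| ≤ elip g * wass μ ν := by
  have : Nonempty {η // IsCoupling η μ ν} := ⟨⟨μ.prod ν, by simp [IsCoupling]⟩⟩
  rw [wass, ENNReal.mul_iInf fun h => absurd h hgL]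
  refine le_iInf fun ⟨η, hfst, hsnd⟩ => ?_
  have h₁ : Integrable (fun p : X × X => g p.1) η :=
    (hfst ▸ hμ).comp_measurable measurable_fst
  have h₂ : Integrable (fun p : X × X => g p.2) η :=
    (hsnd ▸ hν).comp_measurable measurable_snd
  calc ENNReal.ofReal |∫ x, g x ∂μ - ∫ x, g x ∂ν| = ‖∫ p, (g p.1 - g p.2) ∂η‖ₑ := by
        rw [integral_sub h₁ h₂, ← hfst, ← hsnd,
          integral_map measurable_fst.aemeasurable hg.aestronglyMeasurable,
          integral_map measurable_snd.aemeasurable hg.aestronglyMeasurable,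
          Real.enorm_eq_ofReal_abs]
    _ ≤ ∫⁻ p, ‖g p.1 - g p.2‖ₑ ∂η := enorm_integral_le_lintegral_enorm _
    _ ≤ ∫⁻ p, elip g * edist p.1 p.2 ∂η := lintegral_mono fun p => by
        rw [Real.enorm_eq_ofReal_abs]
        exact ofReal_abs_sub_le_elip_mul g p.1 p.2
    _ = elip g * ∫⁻ p, edist p.1 p.2 ∂η := lintegral_const_mul _ measurable_edist

lemma lintegral_le_lintegral_add_wass {μ ν : Measure X} {g : X → ℝ≥0∞} (hg : Measurable g)
    (hlip : ∀ a b, g a ≤ g b + edist a b) :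
    ∫⁻ z, g z ∂μ ≤ ∫⁻ z, g z ∂ν + wass μ ν := by
  rw [wass, ENNReal.add_iInf]
  refine le_iInf fun ⟨η, hfst, hsnd⟩ => ?_
  calc ∫⁻ z, g z ∂μ = ∫⁻ p, g p.1 ∂η := by rw [← hfst, lintegral_map hg measurable_fst]
    _ ≤ ∫⁻ p, g p.2 + edist p.1 p.2 ∂η := lintegral_mono fun p => hlip _ _
    _ = ∫⁻ z, g z ∂ν + ∫⁻ p, edist p.1 p.2 ∂η := by
        rw [lintegral_add_right _ measurable_edist, ← hsnd, lintegral_map hg measurable_snd]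

lemma elip_markovOp_le (K : Kernel X X) [IsMarkovKernel K] {h : X → ℝ} (hh : Measurable h)
    (hL : elip h ≠ ∞) (hi : ∀ x, Integrable h (K x)) : elip (markovOp K h) ≤ tau K * elip h :=
  elip_le_iff.2 fun x y =>
    (ofReal_abs_integral_sub_le_elip_mul_wass hh hL (hi x) (hi y)).trans <| by
      rw [mul_comm (tau K), mul_assoc]
      gcongr
      exact wass_le_tau_mul K x y

lemma measurable_eccOne (π : Measure X) [SFinite π] : Measurable (eccOne π) :=
  measurable_edist.lintegral_prod_right'

section Integrability

variable {π : Measure X} [IsProbabilityMeasure π]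

lemma integrable_of_elip_ne_top {μ : Measure X} [IsFiniteMeasure μ] (hE : ∀ x, eccOne π x ≠ ∞)
    (hμ : ∫⁻ y, eccOne π y ∂μ ≠ ∞) {h : X → ℝ} (hh : Measurable h) (hL : elip h ≠ ∞) :
    Integrable h μ := by
  obtain ⟨x₀⟩ := nonempty_of_isProbabilityMeasure π
  set c := ‖h x₀‖ₑ + elip h * eccOne π x₀
  have hbound : ∀ z, ‖h z‖ₑ ≤ c + elip h * eccOne π z := fun z =>
    calc ‖h z‖ₑ ≤ ‖h x₀‖ₑ + ‖h z - h x₀‖ₑ := by simpa using enorm_add_le (h x₀) (h z - h x₀)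
      _ ≤ ‖h x₀‖ₑ + elip h * (eccOne π z + eccOne π x₀) := by
          rw [Real.enorm_eq_ofReal_abs (h z - h x₀)]
          gcongr
          exact (ofReal_abs_sub_le_elip_mul h z x₀).trans
            (by gcongr; exact edist_le_eccOne_add_eccOne z x₀)
      _ = c + elip h * eccOne π z := by ring
  refine ⟨hh.aestronglyMeasurable, hasFiniteIntegral_iff_enorm.2 ?_⟩
  calc ∫⁻ z, ‖h z‖ₑ ∂μ ≤ ∫⁻ z, c + elip h * eccOne π z ∂μ := lintegral_mono hbound
    _ = c * μ Set.univ + elip h * ∫⁻ z, eccOne π z ∂μ := by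
        rw [lintegral_add_left measurable_const, lintegral_const,
          lintegral_const_mul _ (measurable_eccOne π)]
    _ < ∞ := by
        have := hE x₀
        finiteness

lemma lintegral_eccOne_le (K : Kernel X X) [IsMarkovKernel K] (hK : K.Invariant π) (x : X) :
    ∫⁻ y, eccOne π y ∂(K x) ≤ ∫⁻ y, eccOne π y ∂π + tau K * eccOne π x := by
  have hlip : ∀ a b, eccOne π a ≤ eccOne π b + edist a b := fun a b => by
    rw [edist_comm]
    exact eccOne_le_eccOne_add_edist b a
  have h : ∀ y, ∫⁻ z, eccOne π z ∂(K x) ≤ ∫⁻ z, eccOne π z ∂(K y) + tau K * edist x y := fun y =>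
    (lintegral_le_lintegral_add_wass (measurable_eccOne π) hlip).trans
      (by gcongr; exact wass_le_tau_mul K x y)
  calc ∫⁻ z, eccOne π z ∂(K x) = ∫⁻ _, ∫⁻ z, eccOne π z ∂(K x) ∂π := by simp
    _ ≤ ∫⁻ y, (∫⁻ z, eccOne π z ∂(K y) + tau K * edist x y) ∂π := lintegral_mono h
    _ = ∫⁻ y, eccOne π y ∂π + tau K * eccOne π x := by
        rw [lintegral_add_left (measurable_eccOne π).lintegral_kernel,
          lintegral_const_mul _ measurable_edist_right,
          ← Measure.lintegral_bind K.aemeasurable (measurable_eccOne π).aemeasurable, hK.def]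
        rfl

variable {g : ℕ → X → ℝ}

lemma integral_tsum_of_tsum_elip_ne_top (hg : ∀ n, MemL0 π (g n)) (hsum : ∑' n, elip (g n) ≠ ∞)
    {μ : Measure X} (hμ : ∫⁻ y, eccOne π y ∂μ ≠ ∞) :
    ∫ x, ∑' n, g n x ∂μ = ∑' n, ∫ x, g n x ∂μ := by
  refine integral_tsum (fun n => (hg n).1.aestronglyMeasurable)
    (ne_top_of_le_ne_top (mul_ne_top hsum hμ) ?_)
  rw [← ENNReal.tsum_mul_right]
  refine ENNReal.tsum_le_tsum fun n => ?_
  rw [← lintegral_const_mul _ (measurable_eccOne π)]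
  exact lintegral_mono (enorm_le_elip_mul_eccOne (hg n).2.2.1 (hg n).2.2.2)

lemma MemL0.tsum (hE : ∀ x, eccOne π x ≠ ∞) (hg : ∀ n, MemL0 π (g n))
    (hsum : ∑' n, elip (g n) ≠ ∞) : MemL0 π fun x => ∑' n, g n x := by
  have hs := summable_of_tsum_elip_ne_top hE hg hsum
  have hm : Measurable fun x => ∑' n, g n x :=
    measurable_of_tendsto_metrizable (fun k => Finset.measurable_sum _ fun n _ => (hg n).1)
      (tendsto_pi_nhds.2 fun x => (hs x).hasSum.tendsto_sum_nat)
  have hL : elip (fun x => ∑' n, g n x) ≠ ∞ := ne_top_of_le_ne_top hsum (elip_tsum_le hs)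
  refine memL0_of_elip_ne_top hm hL
    (integrable_of_elip_ne_top hE (lintegral_eccOne_ne_top hE) hm hL) ?_
  rw [integral_tsum_of_tsum_elip_ne_top hg hsum (lintegral_eccOne_ne_top hE)]
  simp [fun n => (hg n).2.2.2]

lemma memL0_markovOp_kpow {P : Kernel X X} (hP : P.Invariant π) (hE : ∀ x, eccOne π x ≠ ∞)
    {f : X → ℝ} (hf : MemL0 π f) {n : ℕ} (hn : elip (markovOp (kpow P n) f) ≠ ∞) :
    MemL0 π (markovOp (kpow P n) f) := by
  have hm := measurable_markovOp (kpow P n) hf.1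
  refine memL0_of_elip_ne_top hm hn
    (integrable_of_elip_ne_top hE (lintegral_eccOne_ne_top hE) hm hn) ?_
  rw [integral_markovOp (invariant_kpow hP n) hf.2.2.1, hf.2.2.2]

end Integrability

section Iterates

variable {π : Measure X} [IsProbabilityMeasure π] {P : Kernel X X} [IsMarkovKernel P]

lemma lintegral_eccOne_kpow_ne_top (hP : P.Invariant π) (htau : tau P ≠ ∞)
    (hE : ∀ x, eccOne π x ≠ ∞) (n : ℕ) (x : X) : ∫⁻ y, eccOne π y ∂(kpow P n x) ≠ ∞ := by
  induction n with
  | zero => rw [kpow_zero, Kernel.id_apply, lintegral_dirac' _ (measurable_eccOne π)]; exact hE x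
  | succ n ih =>
    rw [add_comm, kpow_add, kpow_one, Kernel.comp_apply,
      Measure.lintegral_bind P.aemeasurable (measurable_eccOne π).aemeasurable]
    refine ne_top_of_le_ne_top ?_ (lintegral_mono fun z => lintegral_eccOne_le P hP z)
    rw [lintegral_add_left measurable_const, lintegral_const_mul _ (measurable_eccOne π)]
    simpa using ⟨lintegral_eccOne_ne_top hE, mul_ne_top htau ih⟩

lemma integrable_kpow_apply (hP : P.Invariant π) (htau : tau P ≠ ∞) (hE : ∀ x, eccOne π x ≠ ∞)
    {h : X → ℝ} (hh : Measurable h) (hL : elip h ≠ ∞) (n : ℕ) (x : X) :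
    Integrable h (kpow P n x) :=
  integrable_of_elip_ne_top hE (lintegral_eccOne_kpow_ne_top hP htau hE n x) hh hL

lemma markovOp_kpow_add (hP : P.Invariant π) (htau : tau P ≠ ∞) (hE : ∀ x, eccOne π x ≠ ∞)
    {f : X → ℝ} (hf : Measurable f) (hL : elip f ≠ ∞) (n k : ℕ) :
    markovOp (kpow P (n + k)) f = markovOp (kpow P k) (markovOp (kpow P n) f) := by
  rw [kpow_add]
  exact markovOp_comp fun x => kpow_add P n k ▸ integrable_kpow_apply hP htau hE hf hL (n + k) x

lemma elip_markovOp_kpow_le (hP : P.Invariant π) (htau : tau P ≠ ∞) (hE : ∀ x, eccOne π x ≠ ∞)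
    {f : X → ℝ} (hf : Measurable f) (hL : elip f ≠ ∞) (n : ℕ) :
    elip (markovOp (kpow P n) f) ≤ tau (kpow P n) * elip f :=
  elip_markovOp_le _ hf hL (integrable_kpow_apply hP htau hE hf hL n)

lemma elip_markovOp_kpow_add_mul_le (hP : P.Invariant π) (htau : tau P ≠ ∞)
    (hE : ∀ x, eccOne π x ≠ ∞) {f : X → ℝ} (hf : Measurable f) (hL : elip f ≠ ∞) {n k : ℕ}
    (hn : elip (markovOp (kpow P n) f) ≠ ∞) (hk : tau (kpow P k) ≠ ∞) (q : ℕ) :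
    elip (markovOp (kpow P (n + q * k)) f) ≤ tau (kpow P k) ^ q * elip (markovOp (kpow P n) f) := by
  induction q with
  | zero => simp
  | succ q ih =>
    have hq : elip (markovOp (kpow P (n + q * k)) f) ≠ ∞ :=
      ne_top_of_le_ne_top (mul_ne_top (pow_ne_top hk) hn) ih
    have hqm := measurable_markovOp (kpow P (n + q * k)) hf
    calc elip (markovOp (kpow P (n + (q + 1) * k)) f)
        = elip (markovOp (kpow P k) (markovOp (kpow P (n + q * k)) f)) := by
          rw [← markovOp_kpow_add hP htau hE hf hL, add_one_mul, add_assoc]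
      _ ≤ tau (kpow P k) * elip (markovOp (kpow P (n + q * k)) f) :=
          elip_markovOp_le _ hqm hq (integrable_kpow_apply hP htau hE hqm hq k)
      _ ≤ tau (kpow P k) * (tau (kpow P k) ^ q * elip (markovOp (kpow P n) f)) := by gcongr
      _ = tau (kpow P k) ^ (q + 1) * elip (markovOp (kpow P n) f) := by ring

lemma tsum_elip_markovOp_kpow_ne_top (hP : P.Invariant π) (htau : tau P ≠ ∞)
    (hE : ∀ x, eccOne π x ≠ ∞) {m : ℕ} (hm : 0 < m) (hcontr : tau (kpow P m) < 1)
    {f : X → ℝ} (hf : Measurable f) (hL : elip f ≠ ∞) :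
    ∑' n, elip (markovOp (kpow P n) f) ≠ ∞ := by
  have hf₀ : elip (markovOp (kpow P 0) f) ≠ ∞ := by rwa [kpow_zero, markovOp_id hf]
  have hr : ∀ r, elip (markovOp (kpow P r) f) ≤ tau P ^ r * elip f := fun r => by
    simpa [markovOp_id hf] using
      elip_markovOp_kpow_add_mul_le hP htau hE hf hL hf₀ (k := 1) (by rwa [kpow_one]) r
  have hqr : ∀ q r, elip (markovOp (kpow P (q * m + r)) f) ≤
      tau (kpow P m) ^ q * (tau P ^ r * elip f) := fun q r => by
    rw [add_comm]
    exact (elip_markovOp_kpow_add_mul_le hP htau hE hf hL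
      (ne_top_of_le_ne_top (by finiteness) (hr r)) hcontr.ne_top q).trans (by gcongr; exact hr r)
  have : NeZero m := ⟨hm.ne'⟩
  refine ne_top_of_le_ne_top ?_ <|
    calc ∑' n, elip (markovOp (kpow P n) f)
      = ∑' (p : ℕ × Fin m), elip (markovOp (kpow P (p.1 * m + p.2)) f) :=
        ((Nat.divModEquiv m).symm.tsum_eq _).symm
    _ ≤ ∑' (p : ℕ × Fin m), tau (kpow P m) ^ p.1 * (tau P ^ (p.2 : ℕ) * elip f) :=
        ENNReal.tsum_le_tsum fun p => hqr p.1 p.2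
    _ = (1 - tau (kpow P m))⁻¹ * ((∑ r : Fin m, tau P ^ (r : ℕ)) * elip f) := by
        rw [ENNReal.tsum_prod
          (f := fun q (r : Fin m) => tau (kpow P m) ^ q * (tau P ^ (r : ℕ) * elip f))]
        simp_rw [ENNReal.tsum_mul_left, ENNReal.tsum_mul_right, ENNReal.tsum_geometric,
          tsum_fintype]
  exact mul_ne_top (inv_ne_top.2 (tsub_pos_of_lt hcontr).ne')
    (mul_ne_top (ENNReal.sum_ne_top.2 fun r _ => pow_ne_top htau) hL)

lemma tsum_markovOp_kpow_sub_integral (hP : P.Invariant π) (htau : tau P ≠ ∞)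
    (hE : ∀ x, eccOne π x ≠ ∞) {f : X → ℝ} (hf : MemL0 π f)
    (hg : ∀ n, MemL0 π (markovOp (kpow P n) f)) (hsum : ∑' n, elip (markovOp (kpow P n) f) ≠ ∞)
    (x : X) :
    ∑' n, markovOp (kpow P n) f x - ∫ y, ∑' n, markovOp (kpow P n) f y ∂(P x) = f x := by
  have hPx : ∫⁻ y, eccOne π y ∂(P x) ≠ ∞ := by
    simpa using lintegral_eccOne_kpow_ne_top hP htau hE 1 x
  have hshift : ∀ n, ∫ y, markovOp (kpow P n) f y ∂(P x) = markovOp (kpow P (n + 1)) f x :=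
    fun n => by rw [markovOp_kpow_add hP htau hE hf.1 hf.elip_ne_top n 1, kpow_one]; rfl
  rw [integral_tsum_of_tsum_elip_ne_top hg hsum hPx,
    (summable_of_tsum_elip_ne_top hE hg hsum x).tsum_eq_zero_add]
  simp only [hshift, kpow_zero, markovOp_id hf.1, add_sub_cancel_right]

lemma eq_zero_of_integral_eq_self (hP : P.Invariant π) (htau : tau P ≠ ∞)
    (hE : ∀ x, eccOne π x ≠ ∞) {m : ℕ} (hcontr : tau (kpow P m) < 1) {w : X → ℝ}
    (hw : MemL0 π w) (hharm : ∀ x, ∫ y, w y ∂(P x) = w x) : w = 0 := by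
  have hfix : ∀ n, markovOp (kpow P n) w = w := by
    intro n
    induction n with
    | zero => exact markovOp_id hw.1
    | succ n ih =>
      rw [markovOp_kpow_add hP htau hE hw.1 hw.elip_ne_top n 1, ih, kpow_one]
      exact funext hharm
  have hzero : elip w = 0 := by
    by_contra h
    have hle := elip_markovOp_le (kpow P m) hw.1 hw.elip_ne_top
      (integrable_kpow_apply hP htau hE hw.1 hw.elip_ne_top m)
    rw [hfix m] at hle
    exact (ENNReal.mul_lt_mul_left h hw.elip_ne_top hcontr).not_ge (by simpa using hle)
  funext x
  simpa [hzero] using enorm_le_elip_mul_eccOne hw.2.2.1 hw.2.2.2 x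

lemma eq_of_sub_integral_eq (hP : P.Invariant π) (htau : tau P ≠ ∞)
    (hE : ∀ x, eccOne π x ≠ ∞) {m : ℕ} (hcontr : tau (kpow P m) < 1) {f u v : X → ℝ}
    (hu : MemL0 π u ∧ ∀ x, u x - ∫ y, u y ∂(P x) = f x)
    (hv : MemL0 π v ∧ ∀ x, v x - ∫ y, v y ∂(P x) = f x) : v = u := by
  refine sub_eq_zero.1 (eq_zero_of_integral_eq_self hP htau hE hcontr (hv.1.sub hu.1) fun x => ?_)
  have hi : ∀ {h : X → ℝ}, MemL0 π h → Integrable h (P x) := fun hh => by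
    simpa using integrable_kpow_apply hP htau hE hh.1 hh.elip_ne_top 1 x
  simp only [Pi.sub_apply]
  rw [integral_sub (hi hv.1) (hi hu.1)]
  linarith [hu.2 x, hv.2 x]

end Iterates

end Metric

theorem poisson_solution_Lp_bound_general {X : Type*} [MeasurableSpace X] [MetricSpace X]
    [PolishSpace X] [BorelSpace X]
    (π : Measure X) [IsProbabilityMeasure π]
    (P : Kernel X X) [IsMarkovKernel P] (hinv : π.bind P = π)
    (htau : tau P < ∞) (m : ℕ) (hm : 0 < m) (hcontr : tau (kpow P m) < 1)
    (p : ℝ) (hp : 1 ≤ p) (x₀ : X) (hE : ecc π p x₀ < ∞)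
    (p₀ : ℝ) (hp₀ : 1 ≤ p₀)
    (f : X → ℝ) (hf : MemL0 π f) :
    ∃ u : X → ℝ,
      (MemL0 π u ∧ ∀ x, u x - ∫ y, u y ∂(P x) = f x) ∧
      (∀ x, ENNReal.ofReal |u x| ≤ (∑' n : ℕ, tau (kpow P n)) * elip f * eccOne π x) ∧
      (∫⁻ x, ENNReal.ofReal |u x| ^ p₀ ∂π) ≤
        ((∑' n : ℕ, tau (kpow P n)) * elip f) ^ p₀ * ∫⁻ x, eccOne π x ^ p₀ ∂π ∧
      ∀ v : X → ℝ, (MemL0 π v ∧ ∀ x, v x - ∫ y, v y ∂(P x) = f x) → v = u := by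
  have hE₁ := eccOne_ne_top_of_ecc_ne_top hp hE.ne
  have hsum := tsum_elip_markovOp_kpow_ne_top hinv htau.ne hE₁ hm hcontr hf.1 hf.elip_ne_top
  have hg : ∀ n, MemL0 π (markovOp (kpow P n) f) := fun n =>
    memL0_markovOp_kpow hinv hE₁ hf (ENNReal.ne_top_of_tsum_ne_top hsum n)
  have hu : MemL0 π (fun x => ∑' n, markovOp (kpow P n) f x) ∧
      ∀ x, ∑' n, markovOp (kpow P n) f x - ∫ y, ∑' n, markovOp (kpow P n) f y ∂(P x) = f x :=
    ⟨MemL0.tsum hE₁ hg hsum, tsum_markovOp_kpow_sub_integral hinv htau.ne hE₁ hf hg hsum⟩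
  have hbound : ∀ x, ENNReal.ofReal |∑' n, markovOp (kpow P n) f x| ≤
      (∑' n : ℕ, tau (kpow P n)) * elip f * eccOne π x := fun x =>
    calc ENNReal.ofReal |∑' n, markovOp (kpow P n) f x|
        ≤ (∑' n, elip (markovOp (kpow P n) f)) * eccOne π x :=
          ofReal_abs_tsum_le_tsum_elip_mul hg x
      _ ≤ (∑' n, tau (kpow P n) * elip f) * eccOne π x := by
          gcongr with n
          exact elip_markovOp_kpow_le hinv htau.ne hE₁ hf.1 hf.elip_ne_top n
      _ = (∑' n : ℕ, tau (kpow P n)) * elip f * eccOne π x := by rw [ENNReal.tsum_mul_right]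
  exact ⟨_, hu, hbound, lintegral_rpow_le_of_le_mul (by linarith) (measurable_eccOne π) hbound,
    fun v hv => eq_of_sub_integral_eq hinv htau.ne hE₁ hcontr hu hv⟩

/-- under the assumptions of the previous theorem, if additionally
`∫ E₁^{p₀} dπ < ∞`, the unique solution `u ∈ L₀` of Poisson's equation satisfies the
pointwise bound `|u(x)| ≤ Λ ‖f‖_d E₁(x)` and `∫|u|^{p₀} dπ ≤ (Λ‖f‖_d)^{p₀} ∫ E₁^{p₀} dπ`. -/
theorem poisson_solution_Lp_bound {X : Type*} [MeasurableSpace X] [MetricSpace X]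
    [PolishSpace X] [BorelSpace X]
    (π : Measure X) [IsProbabilityMeasure π]
    (P : Kernel X X) [IsMarkovKernel P] (hinv : π.bind P = π)
    (htau : tau P < ∞) (m : ℕ) (hm : 0 < m) (hcontr : tau (kpow P m) < 1)
    (p : ℝ) (hp : 1 ≤ p) (x₀ : X) (hE : ecc π p x₀ < ∞)
    (p₀ : ℝ) (hp₀ : 1 ≤ p₀) (hE₁ : (∫⁻ x, eccOne π x ^ p₀ ∂π) < ∞)
    (f : X → ℝ) (hf : MemL0 π f) :
    ∃ u : X → ℝ,
      (MemL0 π u ∧ ∀ x, u x - ∫ y, u y ∂(P x) = f x) ∧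
      (∀ x, ENNReal.ofReal |u x| ≤ (∑' n : ℕ, tau (kpow P n)) * elip f * eccOne π x) ∧
      (∫⁻ x, ENNReal.ofReal |u x| ^ p₀ ∂π) ≤
        ((∑' n : ℕ, tau (kpow P n)) * elip f) ^ p₀ * ∫⁻ x, eccOne π x ^ p₀ ∂π ∧
      ∀ v : X → ℝ, (MemL0 π v ∧ ∀ x, v x - ∫ y, v y ∂(P x) = f x) → v = u :=
  poisson_solution_Lp_bound_general π P hinv htau m hm hcontr p hp x₀ hE p₀ hp₀ f hf
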